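/- arXiv:2602.07500 — 4 statements merged into one kernel-verified Lean document; each statement's English description precedes it below -/
import Mathlib

section
/- For α > 0, β > 0, γ > 0, ω ∈ ℝ and z > |ω|^{1/α}, the Laplace transform of t ↦ t^{β-1} E_{α,β}^{γ}(ω t^{α}) equals z^{αγ-β}/(z^{α}-ω)^{γ}, i.e. ∫₀^∞ e^{-z t} t^{β-1} E_{α,β}^{γ}(ω t^{α}) dt = z^{αγ-β}/(z^{α}-ω)^{γ}. -/
/-!
Expand `E_{a,b}^{g}(ω t^a)` in its power series and integrate termwise: the Gamma integral
`∫₀^∞ e^{-zt} t^{ar+b-1} dt = Γ(ar+b) / z^{ar+b}` cancels the factor `Γ(ar+b)` of the `r`-th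
coefficient, which leaves `z^{-b}` times the binomial series
`∑ Γ(g+r) / (r! Γ(g)) x^r = (1 - x)^{-g}` at `x = ω / z^a`. The interchange of sum and integral
is justified because the same computation with `|ω|` in place of `ω` produces a convergent
series, since `|ω| < z^a`.
-/
open Real MeasureTheory Set

/-- Three-parameter Mittag-Leffler function `E_{a,b}^{g}(t)`. -/
noncomputable def ML3 (a b g t : ℝ) : ℝ :=
  ∑' r : ℕ, Real.Gamma (g + r) * t ^ r /
    ((r.factorial : ℝ) * Real.Gamma g * Real.Gamma (a * r + b))

open scoped Nat

namespace Real

theorem Gamma_add_nat_div_Gamma_eq {n : ℕ} (g : ℝ) (hg : ∀ k : ℕ, g ≠ -k) :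
    Gamma (g + n) / Gamma g = (ascPochhammer ℝ n).eval g := by
  induction n with
  | zero => simp [Gamma_ne_zero hg]
  | succ n ih =>
    have hgn : g + n ≠ 0 := fun h => hg n (by linarith)
    rw [ascPochhammer_succ_right, Polynomial.eval_mul, ← ih, Nat.cast_succ, ← add_assoc,
      Gamma_add_one hgn]
    simp
    ring

theorem choose_add_sub_one_eq_Gamma_div {g : ℝ} (hg : ∀ k : ℕ, g ≠ -k) (n : ℕ) :
    Ring.choose (g + n - 1) n = Gamma (g + n) / (n ! * Gamma g) := by
  rw [Ring.choose_eq_smul, Polynomial.descPochhammer_smeval_eq_ascPochhammer,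
    Polynomial.ascPochhammer_smeval_eq_eval, show g + n - 1 - n + 1 = g by ring,
    ← Gamma_add_nat_div_Gamma_eq g hg, smul_eq_mul]
  ring

theorem hasSum_Gamma_add_div_mul_pow {g x : ℝ} (hg : ∀ k : ℕ, g ≠ -k) (hx : |x| < 1) :
    HasSum (fun n : ℕ => Gamma (g + n) / (n ! * Gamma g) * x ^ n) (1 / (1 - x) ^ g) := by
  have h := (one_div_one_sub_rpow_hasFPowerSeriesOnBall_zero g).hasSum
    (y := x) (by simpa [enorm_eq_nnnorm, ← NNReal.coe_lt_coe] using hx)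
  simpa only [FormalMultilinearSeries.ofScalars_apply_eq, smul_eq_mul, zero_add,
    choose_add_sub_one_eq_Gamma_div hg] using h

end Real

theorem integrableOn_rpow_sub_one_mul_exp_neg_mul {s z : ℝ} (hs : 0 < s) (hz : 0 < z) :
    IntegrableOn (fun t : ℝ => t ^ (s - 1) * exp (-(z * t))) (Ioi 0) := by
  simpa only [rpow_one, neg_mul] using
    integrableOn_rpow_mul_exp_neg_mul_rpow (by linarith : -1 < s - 1) one_pos hz

theorem integral_exp_neg_mul_mul_rpow_mul_tsum {a b z : ℝ} {c : ℕ → ℝ} (ha : 0 ≤ a)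
    (hb : 0 < b) (hz : 0 < z)
    (hc : Summable fun r : ℕ => |c r| * Gamma (a * r + b) / z ^ (a * r + b)) :
    ∫ t in Ioi 0, exp (-z * t) * t ^ (b - 1) * ∑' r : ℕ, c r * (t ^ a) ^ r
      = ∑' r : ℕ, c r * Gamma (a * r + b) / z ^ (a * r + b) := by
  have hs (r : ℕ) : 0 < a * r + b := by positivity
  have hterm_integral (C : ℝ) (r : ℕ) :
      ∫ t in Ioi 0, C * (t ^ (a * r + b - 1) * exp (-(z * t)))
        = C * Gamma (a * r + b) / z ^ (a * r + b) := by
    rw [integral_const_mul, integral_rpow_mul_exp_neg_mul_Ioi (hs r) hz, one_div,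
      inv_rpow hz.le]
    ring
  have hterm_norm_integral (r : ℕ) :
      ∫ t in Ioi 0, ‖c r * (t ^ (a * r + b - 1) * exp (-(z * t)))‖
        = |c r| * Gamma (a * r + b) / z ^ (a * r + b) := by
    rw [← hterm_integral]
    refine setIntegral_congr_fun measurableSet_Ioi fun t (ht : 0 < t) => ?_
    simp only [norm_mul, norm_eq_abs, abs_of_pos (rpow_pos_of_pos ht _), abs_exp]
  have hexpand (t : ℝ) (ht : 0 < t) :
      exp (-z * t) * t ^ (b - 1) * ∑' r : ℕ, c r * (t ^ a) ^ r
        = ∑' r : ℕ, c r * (t ^ (a * r + b - 1) * exp (-(z * t))) := by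
    rw [← tsum_mul_left]
    refine tsum_congr fun r => ?_
    rw [← rpow_natCast, ← rpow_mul ht.le, neg_mul, show a * r + b - 1 = b - 1 + a * r by ring,
      rpow_add ht]
    ring
  rw [setIntegral_congr_fun measurableSet_Ioi hexpand,
    ← integral_tsum_of_summable_integral_norm
      (fun r => (integrableOn_rpow_sub_one_mul_exp_neg_mul (hs r) hz).const_mul (c r))
      (by simpa only [hterm_norm_integral] using hc)]
  exact tsum_congr fun r => hterm_integral (c r) r

theorem Gamma_mul_pow_div_mul_Gamma_div_rpow {a b g w z : ℝ} {r : ℕ} (hz : 0 < z)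
    (hs : Gamma (a * r + b) ≠ 0) :
    Gamma (g + r) * w ^ r / (r ! * Gamma g * Gamma (a * r + b)) * Gamma (a * r + b)
        / z ^ (a * r + b)
      = Gamma (g + r) / (r ! * Gamma g) * (w / z ^ a) ^ r / z ^ b := by
  rw [rpow_add hz, rpow_mul hz.le, rpow_natCast, div_pow]
  generalize Gamma (a * r + b) = G at hs ⊢
  field_simp

theorem laplace_transform_mittagLeffler3
    (a b g ω z : ℝ) (ha : 0 < a) (hb : 0 < b) (hg : 0 < g)
    (hz : |ω| ^ (1 / a) < z) :
    ∫ t in Set.Ioi (0 : ℝ), Real.exp (-z * t) * t ^ (b - 1) * ML3 a b g (ω * t ^ a)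
      = z ^ (a * g - b) / (z ^ a - ω) ^ g := by
  have hz0 : 0 < z := (rpow_nonneg (abs_nonneg ω) _).trans_lt hz
  have hωz : |ω| < z ^ a :=
    (rpow_inv_lt_iff_of_pos (abs_nonneg ω) hz0.le ha).1 (by rwa [← one_div])
  have hza : 0 < z ^ a := rpow_pos_of_pos hz0 a
  have hg_ne (k : ℕ) : g ≠ -k := by have : (0 : ℝ) ≤ k := k.cast_nonneg; linarith
  have hΓ (r : ℕ) : Gamma (a * r + b) ≠ 0 := (by positivity : 0 < Gamma (a * r + b)).ne'
  have hML (t : ℝ) : ML3 a b g (ω * t ^ a) = ∑' r : ℕ,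
      Gamma (g + r) * ω ^ r / (r ! * Gamma g * Gamma (a * r + b)) * (t ^ a) ^ r :=
    tsum_congr fun r => by rw [mul_pow]; ring
  have habs (r : ℕ) : |Gamma (g + r) * ω ^ r / (r ! * Gamma g * Gamma (a * r + b))|
      = Gamma (g + r) * |ω| ^ r / (r ! * Gamma g * Gamma (a * r + b)) := by
    rw [abs_div, abs_mul, abs_pow, abs_of_pos (by positivity : 0 < Gamma (g + r)),
      abs_of_pos (by positivity : 0 < r ! * Gamma g * Gamma (a * r + b))]
  have hx : |ω / z ^ a| < 1 := by rwa [abs_div, abs_of_pos hza, div_lt_one hza]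
  simp_rw [hML]
  rw [integral_exp_neg_mul_mul_rpow_mul_tsum ha.le hb hz0]
  · simp_rw [Gamma_mul_pow_div_mul_Gamma_div_rpow hz0 (hΓ _)]
    rw [tsum_div_const, (hasSum_Gamma_add_div_mul_pow hg_ne hx).tsum_eq]
    have hsub : 0 < z ^ a - ω := by linarith [le_abs_self ω]
    rw [one_sub_div hza.ne', div_rpow hsub.le hza.le, ← rpow_mul hz0.le, rpow_sub hz0]
    field_simp
  · simp_rw [habs, Gamma_mul_pow_div_mul_Gamma_div_rpow hz0 (hΓ _)]
    refine (hasSum_Gamma_add_div_mul_pow hg_ne ?_).summable.div_const _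
    simpa [abs_div] using hx
end

section
/- For 0 < α < 1, ν ≥ 0, λ > 0, and t > 0, the convolution identity ∫₀^t y^{α-1} E_{α,α}(-(ν+λx) y^{α}) E_{α}(-(ν+λx)(t-y)^{α}) dy = (t^{α}/α) E_{α,α}(-(ν+λx) t^{α}) holds for every x ≥ 0. -/
/-!
More generally, for `c` real and `α, β, γ > 0`, expand `E_{α,β}(c y^α)` and `E_{α,γ}(c (t-y)^α)`
in their power series and integrate term by term, which is legitimate because the same series
with `|c|` in place of `c` converges. The `(r, s)` term is a Beta integral,
`∫₀ᵗ y^(αr+β-1) (t-y)^(αs+γ-1) dy = Γ(αr+β) Γ(αs+γ) / Γ(α(r+s)+β+γ) · t^(α(r+s)+β+γ-1)`,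
whose numerator cancels the Gamma factors of the coefficients, so the result only depends on
`n = r + s`, which occurs `n + 1` times. For `β = α`, `γ = 1` the identity
`Γ(αn+α+1) = α (n+1) Γ(αn+α)` turns `∑ (n+1) zⁿ / Γ(αn+α+1)` into `E_{α,α}(z) / α`.
-/

open Real MeasureTheory Set

/-- Two-parameter Mittag-Leffler function `E_{a,b}(t)`. -/
noncomputable def ML2 (a b t : ℝ) : ℝ := ∑' r : ℕ, t ^ r / Real.Gamma (a * r + b)

/-- One-parameter Mittag-Leffler function `E_a(t)`. -/
noncomputable def ML1 (a t : ℝ) : ℝ := ML2 a 1 t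

theorem integral_rpow_mul_rpow_sub {p q T : ℝ} (hp : 0 < p) (hq : 0 < q) (hT : 0 < T) :
    ∫ y in (0 : ℝ)..T, y ^ (p - 1) * (T - y) ^ (q - 1)
      = Gamma p * Gamma q / Gamma (p + q) * T ^ (p + q - 1) := by
  have hcomplex : ((∫ y in (0 : ℝ)..T, y ^ (p - 1) * (T - y) ^ (q - 1) : ℝ) : ℂ)
      = ∫ y in (0 : ℝ)..T, (y : ℂ) ^ ((p : ℂ) - 1) * ((T : ℂ) - y) ^ ((q : ℂ) - 1) := by
    rw [← intervalIntegral.integral_ofReal]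
    refine intervalIntegral.integral_congr fun y hy => ?_
    rw [uIcc_of_le hT.le] at hy
    push_cast
    rw [Complex.ofReal_cpow hy.1, Complex.ofReal_cpow (sub_nonneg.2 hy.2)]
    push_cast
    ring
  apply Complex.ofReal_injective
  rw [hcomplex, Complex.betaIntegral_scaled _ _ hT,
    Complex.betaIntegral_eq_Gamma_mul_div _ _ (by simpa using hp) (by simpa using hq)]
  push_cast
  rw [Complex.ofReal_cpow hT.le, ← Complex.Gamma_ofReal, ← Complex.Gamma_ofReal,
    ← Complex.Gamma_ofReal]
  push_cast
  ring

-- The Beta value is positive, so the integral is not the junk value of a non-integrable function.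
theorem intervalIntegrable_rpow_mul_rpow_sub {p q T : ℝ} (hp : 0 < p) (hq : 0 < q) (hT : 0 < T) :
    IntervalIntegrable (fun y => y ^ (p - 1) * (T - y) ^ (q - 1)) volume 0 T := by
  refine intervalIntegral.intervalIntegrable_of_integral_ne_zero ?_
  rw [integral_rpow_mul_rpow_sub hp hq hT]
  have := Gamma_pos_of_pos hp
  have := Gamma_pos_of_pos hq
  have := Gamma_pos_of_pos (add_pos hp hq)
  positivity

-- Log-convexity of `Γ`: the slope `log (y - 1)` of `log ∘ Γ` on `[y - 1, y]` is at most
-- its slope on `[y, y + a]`.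
theorem rpow_mul_Gamma_le_Gamma_add {y a : ℝ} (hy : 1 < y) (ha : 0 < a) :
    (y - 1) ^ a * Gamma y ≤ Gamma (y + a) := by
  have hy1 : 0 < y - 1 := sub_pos.2 hy
  have hslope := convexOn_log_Gamma.slope_mono_adjacent (mem_Ioi.2 hy1)
    (mem_Ioi.2 (by linarith : 0 < y + a)) (sub_one_lt y) (lt_add_of_pos_right y ha)
  have hlog : log (Gamma y) = log (y - 1) + log (Gamma (y - 1)) := by
    conv_lhs => rw [← sub_add_cancel y 1, Gamma_add_one hy1.ne']
    exact log_mul hy1.ne' (Gamma_pos_of_pos hy1).ne'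
  simp only [Function.comp_apply, sub_sub_cancel, div_one, add_sub_cancel_left, hlog,
    add_sub_cancel_right, le_div_iff₀ ha] at hslope
  have hΓ : 0 < Gamma y := Gamma_pos_of_pos (by linarith)
  rw [← log_le_log_iff (by positivity) (Gamma_pos_of_pos (by linarith)),
    log_mul (by positivity) hΓ.ne', log_rpow hy1, hlog]
  linarith

open Filter in
theorem summable_norm_pow_div_Gamma {α β : ℝ} (hα : 0 < α) (hβ : 0 < β) (x : ℝ) :
    Summable fun n : ℕ => ‖x ^ n / Gamma (α * n + β)‖ := by
  have hlin : Tendsto (fun n : ℕ => α * n + β) atTop atTop :=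
    tendsto_atTop_add_const_right _ _ (tendsto_natCast_atTop_atTop.const_mul_atTop hα)
  have hgrowth : Tendsto (fun n : ℕ => (α * n + β - 1) ^ α) atTop atTop :=
    (tendsto_rpow_atTop hα).comp (tendsto_atTop_add_const_right _ _ hlin)
  refine summable_of_ratio_norm_eventually_le (r := 1 / 2) (by norm_num) ?_
  filter_upwards [hgrowth.eventually_ge_atTop (2 * |x|), hlin.eventually_gt_atTop 1]
    with n hx h1
  have hΓ : 0 < Gamma (α * n + β) := Gamma_pos_of_pos (by linarith)
  have hΓα : 0 < Gamma (α * n + β + α) := Gamma_pos_of_pos (by linarith)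
  have hstep : 2 * |x| * Gamma (α * n + β) ≤ Gamma (α * n + β + α) :=
    (mul_le_mul_of_nonneg_right hx hΓ.le).trans (rpow_mul_Gamma_le_Gamma_add h1 hα)
  have hsucc : α * ((n + 1 : ℕ) : ℝ) + β = α * n + β + α := by push_cast; ring
  simp only [Real.norm_eq_abs, abs_abs, abs_div, abs_pow, hsucc, abs_of_pos hΓ, abs_of_pos hΓα,
    pow_succ, abs_mul]
  rw [div_le_iff₀ hΓα]
  calc |x| ^ n * |x|
        = 1 / 2 * (|x| ^ n / Gamma (α * n + β)) * (2 * |x| * Gamma (α * n + β)) := by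
        field_simp
    _ ≤ 1 / 2 * (|x| ^ n / Gamma (α * n + β)) * Gamma (α * n + β + α) := by
        gcongr

theorem summable_succ_mul_norm_pow_div_Gamma {α β : ℝ} (hα : 0 < α) (hβ : 0 < β) (x : ℝ) :
    Summable fun n : ℕ => (n + 1) * ‖x ^ n / Gamma (α * n + β)‖ := by
  refine (summable_norm_pow_div_Gamma hα hβ (2 * x)).of_nonneg_of_le (fun n => by positivity)
    fun n => ?_
  have hn : ((n : ℝ) + 1) ≤ 2 ^ n := by exact_mod_cast Nat.lt_two_pow_self
  simp only [norm_div, norm_pow, mul_pow, norm_mul, mul_div_assoc]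
  gcongr
  simpa using hn

open Finset.HasAntidiagonal in
theorem hasSum_comp_add {E : Type*} [NormedAddCommGroup E] [CompleteSpace E] {h : ℕ → E}
    (hs : Summable fun n : ℕ => (n + 1) * ‖h n‖) :
    HasSum (fun p : ℕ × ℕ => h (p.1 + p.2)) (∑' n : ℕ, (n + 1) • h n) := by
  have hfiber : ∀ n : ℕ,
      HasSum (fun _ : antidiagonal n => h n) ((n + 1) • h n) := by
    intro n
    convert hasSum_fintype (fun _ : antidiagonal n => h n)
    simp
  have hnorm : Summable fun x : Σ n : ℕ, antidiagonal n => ‖h x.1‖ := by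
    rw [summable_sigma_of_nonneg fun _ => norm_nonneg _]
    refine ⟨fun n => (hasSum_fintype _).summable, hs.congr fun n => ?_⟩
    simp [tsum_fintype]
  rw [(hnorm.of_norm.hasSum.sigma hfiber).tsum_eq,
    ← Finset.HasAntidiagonal.sigmaAntidiagonalEquivProd.hasSum_iff]
  convert hnorm.of_norm.hasSum using 2 with x
  obtain ⟨n, p, hp⟩ := x
  simp [mem_antidiagonal.1 hp]

theorem rpow_sub_one_mul_pow_rpow {y : ℝ} (hy : 0 < y) (α β : ℝ) (n : ℕ) :
    y ^ (β - 1) * (y ^ α) ^ n = y ^ (α * n + β - 1) := by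
  rw [← rpow_mul_natCast hy.le, ← rpow_add hy]
  ring_nf

noncomputable def mlConvolutionTerm (α β γ c t : ℝ) (p : ℕ × ℕ) (y : ℝ) : ℝ :=
  c ^ (p.1 + p.2) / (Gamma (α * p.1 + β) * Gamma (α * p.2 + γ)) *
    (y ^ (α * p.1 + β - 1) * (t - y) ^ (α * p.2 + γ - 1))

section Convolution

variable {α β γ t : ℝ}

theorem rpow_mul_ML2_mul_rpow_mul_ML2_eq_tsum (hα : 0 < α) (hβ : 0 < β) (hγ : 0 < γ) (c : ℝ)
    {y : ℝ} (hy : y ∈ Ioo 0 t) :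
    y ^ (β - 1) * ML2 α β (c * y ^ α) * ((t - y) ^ (γ - 1) * ML2 α γ (c * (t - y) ^ α))
      = ∑' p : ℕ × ℕ, mlConvolutionTerm α β γ c t p y := by
  have hty : 0 < t - y := sub_pos.2 hy.2
  calc _ = y ^ (β - 1) * (t - y) ^ (γ - 1) *
          (ML2 α β (c * y ^ α) * ML2 α γ (c * (t - y) ^ α)) := by
        ring
    _ = y ^ (β - 1) * (t - y) ^ (γ - 1) * ∑' p : ℕ × ℕ,
          (c * y ^ α) ^ p.1 / Gamma (α * p.1 + β) *
            ((c * (t - y) ^ α) ^ p.2 / Gamma (α * p.2 + γ)) := by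
        rw [ML2, ML2, tsum_mul_tsum_of_summable_norm (summable_norm_pow_div_Gamma hα hβ _)
          (summable_norm_pow_div_Gamma hα hγ _)]
    _ = _ := by
        rw [← tsum_mul_left]
        congr 1 with p
        rw [mlConvolutionTerm, mul_pow, mul_pow, ← rpow_sub_one_mul_pow_rpow hy.1,
          ← rpow_sub_one_mul_pow_rpow hty]
        ring

theorem integral_mlConvolutionTerm (hα : 0 < α) (hβ : 0 < β) (hγ : 0 < γ) (ht : 0 < t)
    (c : ℝ) (p : ℕ × ℕ) :
    ∫ y in (0 : ℝ)..t, mlConvolutionTerm α β γ c t p y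
      = t ^ (β + γ - 1) *
          ((c * t ^ α) ^ (p.1 + p.2) / Gamma (α * (p.1 + p.2 : ℕ) + β + γ)) := by
  obtain ⟨r, s⟩ := p
  have hΓr := Gamma_pos_of_pos (by positivity : 0 < α * r + β)
  have hΓs := Gamma_pos_of_pos (by positivity : 0 < α * s + γ)
  have hΓ := Gamma_pos_of_pos (by positivity : 0 < α * (r + s : ℕ) + β + γ)
  simp only [mlConvolutionTerm]
  have hsum : α * r + β + (α * s + γ) = α * (r + s : ℕ) + β + γ := by push_cast; ring
  have hpow : t ^ (α * (r + s : ℕ) + β + γ - 1) = t ^ (β + γ - 1) * (t ^ α) ^ (r + s) := by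
    rw [rpow_sub_one_mul_pow_rpow ht]
    ring_nf
  rw [intervalIntegral.integral_const_mul, integral_rpow_mul_rpow_sub (by positivity)
    (by positivity) ht, hsum, hpow]
  field_simp
  ring

theorem intervalIntegrable_mlConvolutionTerm (hα : 0 < α) (hβ : 0 < β) (hγ : 0 < γ)
    (ht : 0 < t) (c : ℝ) (p : ℕ × ℕ) :
    IntervalIntegrable (mlConvolutionTerm α β γ c t p) volume 0 t :=
  (intervalIntegrable_rpow_mul_rpow_sub (by positivity) (by positivity) ht).const_mul _

theorem norm_mlConvolutionTerm (hα : 0 < α) (hβ : 0 < β) (hγ : 0 < γ) (c : ℝ) (p : ℕ × ℕ)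
    {y : ℝ} (hy : y ∈ Icc 0 t) :
    ‖mlConvolutionTerm α β γ c t p y‖ = mlConvolutionTerm α β γ |c| t p y := by
  have hΓr := Gamma_pos_of_pos (by positivity : 0 < α * p.1 + β)
  have hΓs := Gamma_pos_of_pos (by positivity : 0 < α * p.2 + γ)
  have hy0 : 0 ≤ y ^ (α * p.1 + β - 1) := rpow_nonneg hy.1 _
  have hty : 0 ≤ (t - y) ^ (α * p.2 + γ - 1) := rpow_nonneg (sub_nonneg.2 hy.2) _
  rw [mlConvolutionTerm, mlConvolutionTerm, Real.norm_eq_abs, abs_mul, abs_div, abs_pow,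
    abs_of_pos (mul_pos hΓr hΓs), abs_of_nonneg (mul_nonneg hy0 hty)]

theorem integral_rpow_mul_ML2_mul_rpow_mul_ML2 (hα : 0 < α) (hβ : 0 < β) (hγ : 0 < γ)
    (ht : 0 < t) (c : ℝ) :
    ∫ y in (0 : ℝ)..t,
        y ^ (β - 1) * ML2 α β (c * y ^ α) *
          ((t - y) ^ (γ - 1) * ML2 α γ (c * (t - y) ^ α))
      = t ^ (β + γ - 1) *
          ∑' n : ℕ, (n + 1) * ((c * t ^ α) ^ n / Gamma (α * n + β + γ)) := by
  set g : ℝ → ℕ → ℝ := fun d n =>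
    t ^ (β + γ - 1) * ((d * t ^ α) ^ n / Gamma (α * n + β + γ))
  have hg : ∀ d, HasSum (fun p : ℕ × ℕ => g d (p.1 + p.2)) (∑' n : ℕ, (n + 1) • g d n) := by
    refine fun d => hasSum_comp_add ?_
    refine ((summable_succ_mul_norm_pow_div_Gamma hα (by positivity : 0 < β + γ)
      (d * t ^ α)).mul_left (t ^ (β + γ - 1))).congr fun n => ?_
    simp only [g, norm_mul, Real.norm_of_nonneg (rpow_nonneg ht.le _), add_assoc]
    ring
  have hIoo : ∀ f : ℝ → ℝ, ∫ y in (0 : ℝ)..t, f y = ∫ y in Ioo 0 t, f y := fun f => by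
    rw [intervalIntegral.integral_of_le ht.le, integral_Ioc_eq_integral_Ioo]
  rw [hIoo, setIntegral_congr_fun measurableSet_Ioo
    fun y hy => rpow_mul_ML2_mul_rpow_mul_ML2_eq_tsum hα hβ hγ c hy,
    ← integral_tsum_of_summable_integral_norm]
  · simp_rw [← hIoo, integral_mlConvolutionTerm hα hβ hγ ht]
    rw [(hg c).tsum_eq, ← tsum_mul_left]
    simp only [g, nsmul_eq_mul]
    exact tsum_congr fun n => by push_cast; ring
  · exact fun p => (intervalIntegrable_mlConvolutionTerm hα hβ hγ ht c p).1.mono_set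
      Ioo_subset_Ioc_self
  · refine (hg |c|).summable.congr fun p => ?_
    rw [setIntegral_congr_fun measurableSet_Ioo
      fun y hy => norm_mlConvolutionTerm hα hβ hγ c p (Ioo_subset_Icc_self hy), ← hIoo,
      integral_mlConvolutionTerm hα hβ hγ ht]

end Convolution

theorem tsum_succ_mul_pow_div_Gamma_add_one {α : ℝ} (hα : 0 < α) (z : ℝ) :
    ∑' n : ℕ, (n + 1) * (z ^ n / Gamma (α * n + α + 1)) = ML2 α α z / α := by
  rw [ML2, ← tsum_div_const]
  refine tsum_congr fun n => ?_
  have hpos : 0 < α * n + α := by positivity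
  rw [Gamma_add_one hpos.ne']
  field_simp [(Gamma_pos_of_pos hpos).ne']

theorem mittagLeffler_convolution_general
    (a ν lam t : ℝ) (ha : 0 < a) (ht : 0 < t) :
    ∀ x ≥ (0 : ℝ),
      ∫ y in (0 : ℝ)..t,
          y ^ (a - 1) * ML2 a a (-(ν + lam * x) * y ^ a) *
            ML1 a (-(ν + lam * x) * (t - y) ^ a)
        = t ^ a / a * ML2 a a (-(ν + lam * x) * t ^ a) := by
  intro x _
  have h := integral_rpow_mul_ML2_mul_rpow_mul_ML2 ha ha one_pos ht (-(ν + lam * x))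
  simp only [sub_self, rpow_zero, one_mul, add_sub_cancel_right,
    tsum_succ_mul_pow_div_Gamma_add_one ha] at h
  simp only [ML1, h]
  ring

theorem mittagLeffler_convolution
    (a ν lam t : ℝ) (ha : 0 < a) (ha1 : a < 1) (hν : 0 ≤ ν) (hlam : 0 < lam)
    (ht : 0 < t) :
    ∀ x ≥ (0 : ℝ),
      ∫ y in (0 : ℝ)..t,
          y ^ (a - 1) * ML2 a a (-(ν + lam * x) * y ^ a) *
            ML1 a (-(ν + lam * x) * (t - y) ^ a)
        = t ^ a / a * ML2 a a (-(ν + lam * x) * t ^ a) :=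
  mittagLeffler_convolution_general a ν lam t ha ht
end

section
/- For ρ, μ, ν, γ > 0, ω ∈ ℝ and x > 0, ∫₀^x u^{μ-1} E_{ρ,μ}^{γ}(ω u^{ρ}) (x-u)^{ν-1} du = Γ(ν) x^{μ+ν-1} E_{ρ,μ+ν}^{γ}(ω x^{ρ}). -/
/-!
Expanding `E_{ρ,μ}^γ(ω u^ρ)` as its power series turns the integrand into a series of Beta
kernels `u^(ρr+μ-1) (x-u)^(ν-1)`, and the `r`-th one integrates to
`Γ(ρr+μ) Γ(ν) / Γ(ρr+μ+ν) · x^(ρr+μ+ν-1)`. The factor `Γ(ρr+μ)` cancels against the denominator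
of the series coefficient, which leaves `Γ(ν) x^(μ+ν-1)` times the `r`-th term of
`E_{ρ,μ+ν}^γ(ω x^ρ)`. Integrating term by term is legitimate because the kernels are nonnegative
and the resulting series converges absolutely: `Γ(γ+r) = O(2^r r!)`, while `Γ(ρr+μ)` eventually
exceeds every geometric sequence.
-/

open Real MeasureTheory Set

open Filter Asymptotics
open scoped Nat

namespace Real

theorem Gamma_add_natCast_isBigO (g : ℝ) :
    (fun r : ℕ => Gamma (g + r)) =O[atTop] fun r => (2 : ℝ) ^ r * r ! := by
  set m := ⌈g⌉₊
  refine IsBigO.of_bound (2 ^ m * m !) ?_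
  filter_upwards [tendsto_natCast_atTop_atTop.eventually_ge_atTop (2 - g)] with r hr
  have h2 : 2 ≤ g + r := by linarith
  have hle : g + r ≤ ((r + m : ℕ) : ℝ) + 1 := by push_cast; linarith [Nat.le_ceil g]
  have hfac : (r + m)! ≤ 2 ^ m * m ! * (2 ^ r * r !) := by
    rw [← Nat.add_choose_mul_factorial_mul_factorial r m]
    calc _ ≤ 2 ^ (r + m) * r ! * m ! := by gcongr; exact Nat.choose_le_two_pow _ _
      _ = _ := by ring
  calc ‖Gamma (g + r)‖ = Gamma (g + r) := norm_of_nonneg (Gamma_pos_of_pos (by linarith)).le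
    _ ≤ Gamma ((r + m : ℕ) + 1) :=
      Gamma_strictMonoOn_Ici.monotoneOn h2 (mem_Ici.2 (h2.trans hle)) hle
    _ = (r + m)! := Gamma_nat_eq_factorial _
    _ ≤ 2 ^ m * m ! * (2 ^ r * r !) := by exact_mod_cast hfac
    _ = 2 ^ m * m ! * ‖(2 : ℝ) ^ r * (r ! : ℝ)‖ := by rw [norm_of_nonneg (by positivity)]

theorem eventually_pow_le_Gamma_mul_add {A : ℝ} (hA : 1 ≤ A) {ρ : ℝ} (hρ : 0 < ρ) (μ : ℝ) :
    ∀ᶠ r : ℕ in atTop, A ^ r ≤ Gamma (ρ * r + μ) := by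
  set M := A ^ (2 / ρ)
  have hM : 1 ≤ M := one_le_rpow hA (by positivity)
  have hhalf : Tendsto (fun r : ℕ => ρ * r / 2) atTop atTop :=
    (tendsto_natCast_atTop_atTop.const_mul_atTop hρ).atTop_div_const two_pos
  have hfac : ∀ᶠ n : ℕ in atTop, M ^ n ≤ n ! :=
    ((FloorSemiring.tendsto_pow_div_factorial_atTop M).eventually (gt_mem_nhds one_pos)).mono
      fun n hn => ((div_lt_one (by positivity)).1 hn).le
  have hk := tendsto_nat_ceil_atTop.comp hhalf
  filter_upwards [hk.eventually hfac, hk.eventually_ge_atTop 1,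
    hhalf.eventually_ge_atTop (2 - μ)] with r hMk hk1 hr
  set k := ⌈ρ * r / 2⌉₊
  have hk1 : (1 : ℝ) ≤ k := by exact_mod_cast hk1
  have hkr : (k : ℝ) + 1 ≤ ρ * r + μ := by
    linarith [Nat.ceil_lt_add_one (by positivity : 0 ≤ ρ * r / 2)]
  calc A ^ r = M ^ (ρ * r / 2) := by
        rw [← rpow_mul (by positivity), ← rpow_natCast]; congr 1; field_simp
    _ ≤ M ^ k := by
        rw [← rpow_natCast]; exact rpow_le_rpow_of_exponent_le hM (Nat.le_ceil _)
    _ ≤ k ! := hMk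
    _ = Gamma (k + 1) := (Gamma_nat_eq_factorial k).symm
    _ ≤ Gamma (ρ * r + μ) :=
      Gamma_strictMonoOn_Ici.monotoneOn (by simp; linarith) (by simp; linarith) hkr

theorem summable_pow_div_Gamma_mul_add (C : ℝ) {ρ : ℝ} (hρ : 0 < ρ) (μ : ℝ) :
    Summable fun r : ℕ => C ^ r / Gamma (ρ * r + μ) := by
  set A := 2 * |C| + 1
  have hA : 1 ≤ A := by linarith [abs_nonneg C]
  have hq : |C| / A < 1 := (div_lt_one (by positivity)).2 (by linarith [abs_nonneg C])
  refine summable_of_isBigO_nat (summable_geometric_of_lt_one (by positivity) hq)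
    (IsBigO.of_bound 1 ?_)
  filter_upwards [eventually_pow_le_Gamma_mul_add hA hρ μ] with r hr
  have hΓ : 0 < Gamma (ρ * r + μ) := (pow_pos (by positivity) r).trans_le hr
  rw [norm_div, norm_pow, norm_of_nonneg hΓ.le, Real.norm_eq_abs, one_mul, div_pow,
    norm_of_nonneg (by positivity)]
  gcongr

theorem integral_rpow_mul_sub_rpow {a b x : ℝ} (ha : 0 < a) (hb : 0 < b) (hx : 0 < x) :
    ∫ u in (0 : ℝ)..x, u ^ (a - 1) * (x - u) ^ (b - 1)
      = Gamma a * Gamma b / Gamma (a + b) * x ^ (a + b - 1) := by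
  have hcast : ∀ u ∈ uIcc 0 x, ((u ^ (a - 1) * (x - u) ^ (b - 1) : ℝ) : ℂ) =
      (u : ℂ) ^ ((a : ℂ) - 1) * ((x : ℂ) - u) ^ ((b : ℂ) - 1) := fun u hu => by
    rw [uIcc_of_le hx.le] at hu
    push_cast [Complex.ofReal_cpow hu.1, Complex.ofReal_cpow (sub_nonneg.2 hu.2)]
    rfl
  apply Complex.ofReal_injective
  rw [← intervalIntegral.integral_ofReal, intervalIntegral.integral_congr hcast,
    Complex.betaIntegral_scaled _ _ hx,
    Complex.betaIntegral_eq_Gamma_mul_div _ _ (by simpa) (by simpa)]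
  push_cast [Complex.ofReal_cpow hx.le, ← Complex.Gamma_ofReal]
  ring

theorem intervalIntegrable_rpow_mul_sub_rpow {a b x : ℝ} (ha : 0 < a) (hb : 0 < b) (hx : 0 < x) :
    IntervalIntegrable (fun u => u ^ (a - 1) * (x - u) ^ (b - 1)) volume 0 x := by
  refine intervalIntegral.intervalIntegrable_of_integral_ne_zero ?_
  rw [integral_rpow_mul_sub_rpow ha hb hx]
  positivity

end Real

theorem MeasureTheory.integral_tsum_mul_of_nonneg {α ι : Type*} [MeasurableSpace α] [Countable ι]
    {μ : Measure α} {c : ι → ℝ} {g : ι → α → ℝ} (hg : ∀ i, 0 ≤ᵐ[μ] g i)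
    (hgi : ∀ i, Integrable (g i) μ) (hs : Summable fun i => c i * ∫ a, g i a ∂μ) :
    ∫ a, ∑' i, c i * g i a ∂μ = ∑' i, c i * ∫ a, g i a ∂μ := by
  have hnorm : ∀ i, ∫ a, ‖c i * g i a‖ ∂μ = ‖c i * ∫ a, g i a ∂μ‖ := fun i => by
    rw [norm_mul, norm_of_nonneg (integral_nonneg_of_ae (hg i)), ← integral_const_mul]
    exact integral_congr_ae ((hg i).mono fun a ha => by simp [norm_of_nonneg ha])
  rw [← integral_tsum_of_summable_integral_norm (fun i => (hgi i).const_mul (c i))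
    (by simpa only [hnorm] using hs.norm)]
  simp only [integral_const_mul]

theorem summable_ML3_terms {a : ℝ} (ha : 0 < a) (b g t : ℝ) :
    Summable fun r : ℕ => Gamma (g + r) * t ^ r / ((r ! : ℝ) * Gamma g * Gamma (a * r + b)) := by
  have hO := (Gamma_add_natCast_isBigO g).mul
    (isBigO_refl (fun r : ℕ => t ^ r / ((r ! : ℝ) * Gamma g * Gamma (a * r + b))) atTop)
  refine summable_of_isBigO_nat ((summable_pow_div_Gamma_mul_add (2 * t) ha b).div_const (Gamma g))
    ((hO.congr_left fun r => by ring).congr_right fun r => ?_)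
  field_simp
  ring

theorem rpow_mul_ML3_eq_tsum {a b g t u : ℝ} (hu : 0 < u) :
    u ^ (b - 1) * ML3 a b g (t * u ^ a) = ∑' r : ℕ,
      Gamma (g + r) * t ^ r / ((r ! : ℝ) * Gamma g * Gamma (a * r + b)) * u ^ (a * r + b - 1) := by
  rw [ML3, ← tsum_mul_left]
  congr 1; ext r
  rw [mul_pow, ← rpow_mul_natCast hu.le, add_sub_assoc, rpow_add hu]
  ring

theorem ML3_term_mul_integral_rpow_mul_sub_rpow {ρ μ ν g t x : ℝ} (hρ : 0 ≤ ρ) (hμ : 0 < μ)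
    (hν : 0 < ν) (hx : 0 < x) (r : ℕ) :
    Gamma (g + r) * t ^ r / ((r ! : ℝ) * Gamma g * Gamma (ρ * r + μ)) *
        ∫ u in (0 : ℝ)..x, u ^ (ρ * r + μ - 1) * (x - u) ^ (ν - 1) =
      Gamma ν * x ^ (μ + ν - 1) *
        (Gamma (g + r) * (t * x ^ ρ) ^ r / ((r ! : ℝ) * Gamma g * Gamma (ρ * r + (μ + ν)))) := by
  have hρμ : 0 < ρ * r + μ := by positivity
  rw [integral_rpow_mul_sub_rpow hρμ hν hx, mul_pow, ← rpow_mul_natCast hx.le,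
    show ρ * r + μ + ν - 1 = ρ * r + (μ + ν - 1) by ring, rpow_add hx,
    show ρ * r + μ + ν = ρ * r + (μ + ν) by ring]
  have := (Gamma_pos_of_pos hρμ).ne'
  field_simp

theorem mittagLeffler3_fractional_integral_general
    (ρ μ ν γ ω x : ℝ) (hρ : 0 < ρ) (hμ : 0 < μ) (hν : 0 < ν)
    (hx : 0 < x) :
    ∫ u in (0 : ℝ)..x, u ^ (μ - 1) * ML3 ρ μ γ (ω * u ^ ρ) * (x - u) ^ (ν - 1)
      = Real.Gamma ν * x ^ (μ + ν - 1) * ML3 ρ (μ + ν) γ (ω * x ^ ρ) := by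
  have hexpand : EqOn (fun u => u ^ (μ - 1) * ML3 ρ μ γ (ω * u ^ ρ) * (x - u) ^ (ν - 1))
      (fun u => ∑' r : ℕ, Gamma (γ + r) * ω ^ r / ((r ! : ℝ) * Gamma γ * Gamma (ρ * r + μ)) *
        (u ^ (ρ * r + μ - 1) * (x - u) ^ (ν - 1))) (Ioc 0 x) := fun u hu => by
    simp only [rpow_mul_ML3_eq_tsum hu.1, ← tsum_mul_right, mul_assoc]
  have hterm := ML3_term_mul_integral_rpow_mul_sub_rpow hρ.le hμ hν hx (g := γ) (t := ω)
  simp only [intervalIntegral.integral_of_le hx.le] at hterm ⊢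
  rw [setIntegral_congr_fun measurableSet_Ioc hexpand, integral_tsum_mul_of_nonneg, ML3,
    ← tsum_mul_left]
  · exact tsum_congr hterm
  · exact fun r => ae_restrict_of_forall_mem measurableSet_Ioc fun u hu =>
      mul_nonneg (rpow_nonneg hu.1.le _) (rpow_nonneg (sub_nonneg.2 hu.2) _)
  · exact fun r => (intervalIntegrable_rpow_mul_sub_rpow (by positivity) hν hx).1
  · simpa only [hterm] using (summable_ML3_terms hρ (μ + ν) γ (ω * x ^ ρ)).mul_left _

theorem mittagLeffler3_fractional_integral
    (ρ μ ν γ ω x : ℝ) (hρ : 0 < ρ) (hμ : 0 < μ) (hν : 0 < ν) (hγ : 0 < γ)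
    (hx : 0 < x) :
    ∫ u in (0 : ℝ)..x, u ^ (μ - 1) * ML3 ρ μ γ (ω * u ^ ρ) * (x - u) ^ (ν - 1)
      = Real.Gamma ν * x ^ (μ + ν - 1) * ML3 ρ (μ + ν) γ (ω * x ^ ρ) :=
  mittagLeffler3_fractional_integral_general ρ μ ν γ ω x hρ hμ hν hx
end

section
/- For θ > 0, 0 < α < 1, ν > 0 and t > 0, the function x(t) = e^{-θt} ∑_{n=0}^∞ ∑_{r=0}^∞ (-ν t^α)^n (θ t)^r E_{α,nα+r+1}^{n}(θ^α t^α) satisfies ∫₀^∞ e^{-zt} x(t) dt = φ(z)/(z(φ(z)+ν)) for all sufficiently large z > 0, where φ(z) = (z+θ)^α - θ^α. -/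
/-!
Expanding the Mittag-Leffler functions, `e^{θt} x(t)` is the triple series
`∑_{n,r,k} (-ν)^n θ^r ((n)_k / k!) θ^{αk} t^e / Γ(e + 1)` with `e = nα + r + kα`.
Since `t^e / Γ(e + 1)` has Laplace transform `w^{-(e+1)}`, integrating term by term at
`w = z + θ` gives a geometric series in `r`, a negative binomial series in `k` and then a
geometric series in `n`, which sum to `φ(z) / (z (φ(z) + ν))`. The integrated series converges
absolutely once `(z + θ)^α > θ^α + ν`. This justifies the interchange, and it also forces the
triple series to converge for almost every `t`, so that it may be regrouped into the double
series of the statement.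
-/

open Real MeasureTheory Set

/-- Three-parameter Mittag-Leffler function with nonnegative integer upper
parameter `γ`, using the rising factorial (convention `E^0_{a,b}(t) = 1/Γ(b)`). -/
noncomputable def ML3nat (a b : ℝ) (γ : ℕ) (t : ℝ) : ℝ :=
  ∑' r : ℕ, (γ.ascFactorial r : ℝ) * t ^ r /
    ((r.factorial : ℝ) * Real.Gamma (a * r + b))

open scoped Nat

lemma hasSum_ascFactorial_div_factorial_mul_pow {𝕜 : Type*} [NormedField 𝕜] [CharZero 𝕜]
    [CompleteSpace 𝕜] (n : ℕ) {q : 𝕜} (hq : ‖q‖ < 1) :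
    HasSum (fun k => (n.ascFactorial k : 𝕜) / k ! * q ^ k) ((1 - q) ^ n)⁻¹ := by
  cases n with
  | zero =>
    convert hasSum_ite_eq (0 : ℕ) (1 : 𝕜) using 1
    · funext k
      cases k <;> simp [Nat.zero_ascFactorial]
    · simp
  | succ m =>
    convert hasSum_choose_mul_geometric_of_norm_lt_one m hq using 1
    · funext k
      rw [Nat.ascFactorial_eq_factorial_mul_choose, add_comm k m, Nat.choose_symm_add]
      push_cast
      rw [mul_div_cancel_left₀ _ (Nat.cast_ne_zero.2 k.factorial_ne_zero)]
    · rw [one_div]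

noncomputable def tripleTerm (u s q : ℝ) (p : ℕ × ℕ × ℕ) : ℝ :=
  u ^ p.1 * s ^ p.2.1 * ((p.1.ascFactorial p.2.2 : ℝ) / p.2.2 ! * q ^ p.2.2)

noncomputable def tripleExponent (a : ℝ) (p : ℕ × ℕ × ℕ) : ℝ :=
  a * p.1 + p.2.1 + a * p.2.2

section tripleTerm

variable {u s q : ℝ}

lemma abs_tripleTerm (p : ℕ × ℕ × ℕ) : |tripleTerm u s q p| = tripleTerm |u| |s| |q| p := by
  simp only [tripleTerm, abs_mul, abs_pow, abs_div, Nat.abs_cast]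

lemma tripleTerm_nonneg (hu : 0 ≤ u) (hs : 0 ≤ s) (hq : 0 ≤ q) (p : ℕ × ℕ × ℕ) :
    0 ≤ tripleTerm u s q p := by
  unfold tripleTerm
  positivity

lemma hasSum_tripleTerm_fiber (hs : |s| < 1) (hq : |q| < 1) (n : ℕ) :
    HasSum (fun rk : ℕ × ℕ => tripleTerm u s q (n, rk))
      (u ^ n * ((1 - s)⁻¹ * ((1 - q) ^ n)⁻¹)) := by
  have hgeom := hasSum_geometric_of_abs_lt_one hs
  have hbinom := hasSum_ascFactorial_div_factorial_mul_pow n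
    (by rwa [Real.norm_eq_abs] : ‖q‖ < 1)
  have hgeom_norm := summable_norm_iff.2 hgeom.summable
  have hbinom_norm := summable_norm_iff.2 hbinom.summable
  have hprod := hgeom.mul hbinom (summable_mul_of_summable_norm hgeom_norm hbinom_norm)
  have hterm : (fun rk : ℕ × ℕ => tripleTerm u s q (n, rk)) = fun rk =>
      u ^ n * (s ^ rk.1 * ((n.ascFactorial rk.2 : ℝ) / rk.2 ! * q ^ rk.2)) := by
    funext rk
    simp only [tripleTerm]
    ring
  rw [hterm]
  exact hprod.mul_left (u ^ n)

lemma hasSum_tripleTerm (hs : |s| < 1) (hqu : |q| + |u| < 1) :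
    HasSum (tripleTerm u s q) ((1 - s)⁻¹ * (1 - u / (1 - q))⁻¹) := by
  have hq : |q| < 1 := by linarith [abs_nonneg u]
  have h1q : 0 < 1 - q := by linarith [le_abs_self q]
  have hsummable : Summable (tripleTerm u s q) := by
    rw [← summable_abs_iff]
    simp only [abs_tripleTerm]
    have hfiber (n : ℕ) := hasSum_tripleTerm_fiber (u := |u|) (s := |s|) (q := |q|)
      (by rwa [abs_abs]) (by rwa [abs_abs]) n
    have hratio : |u| / (1 - |q|) < 1 := (div_lt_one (by linarith)).2 (by linarith)
    refine (summable_prod_of_nonneg fun p => tripleTerm_nonneg (abs_nonneg u) (abs_nonneg s)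
      (abs_nonneg q) p).2 ⟨fun n => (hfiber n).summable, ?_⟩
    refine ((summable_geometric_of_lt_one (by positivity) hratio).mul_left (1 - |s|)⁻¹).congr
      fun n => ?_
    rw [(hfiber n).tsum_eq, div_pow]
    ring
  have hratio : |u / (1 - q)| < 1 := by
    rw [abs_div, abs_of_pos h1q]
    exact (div_lt_one h1q).2 (by linarith [le_abs_self q])
  suffices ∑' p, tripleTerm u s q p = (1 - s)⁻¹ * (1 - u / (1 - q))⁻¹ from
    this ▸ hsummable.hasSum
  rw [hsummable.tsum_prod, ← tsum_geometric_of_abs_lt_one hratio, ← tsum_mul_left]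
  refine tsum_congr fun n => ?_
  rw [(hasSum_tripleTerm_fiber hs hq n).tsum_eq, div_pow]
  ring

end tripleTerm

lemma tripleExponent_nonneg {a : ℝ} (ha : 0 ≤ a) (p : ℕ × ℕ × ℕ) :
    0 ≤ tripleExponent a p := by
  unfold tripleExponent
  positivity

lemma tripleTerm_mul_rpow_tripleExponent {x : ℝ} (hx : 0 < x) (a u s q : ℝ)
    (p : ℕ × ℕ × ℕ) :
    tripleTerm u s q p * x ^ tripleExponent a p
      = tripleTerm (u * x ^ a) (s * x) (q * x ^ a) p := by
  obtain ⟨n, r, k⟩ := p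
  simp only [tripleTerm, tripleExponent]
  rw [rpow_add hx, rpow_add hx, rpow_natCast, rpow_mul hx.le, rpow_mul hx.le,
    rpow_natCast, rpow_natCast]
  ring

lemma hasSum_tripleTerm_mul_inv_rpow {u s q a w : ℝ} (hw : 0 < w) (hs : |s| < w)
    (hqu : |q| + |u| < w ^ a) :
    HasSum (fun p => tripleTerm u s q p * w⁻¹ ^ (tripleExponent a p + 1))
      ((w ^ a - q) / ((w - s) * (w ^ a - q - u))) := by
  have hw' : 0 < w⁻¹ := inv_pos.2 hw
  have hwa : 0 < w ^ a := rpow_pos_of_pos hw a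
  have hv : w⁻¹ ^ a = (w ^ a)⁻¹ := inv_rpow hw.le a
  have hs' : |s * w⁻¹| < 1 := by
    rw [abs_mul, abs_of_pos hw', ← div_eq_mul_inv, div_lt_one hw]
    exact hs
  have hqu' : |q * w⁻¹ ^ a| + |u * w⁻¹ ^ a| < 1 := by
    rw [abs_mul, abs_mul, abs_of_pos (rpow_pos_of_pos hw' a), ← add_mul, hv, ← div_eq_mul_inv,
      div_lt_one hwa]
    exact hqu
  have hterm : (fun p => tripleTerm u s q p * w⁻¹ ^ (tripleExponent a p + 1))
      = fun p => w⁻¹ * tripleTerm (u * w⁻¹ ^ a) (s * w⁻¹) (q * w⁻¹ ^ a) p := by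
    funext p
    rw [rpow_add_one hw'.ne', ← mul_assoc, tripleTerm_mul_rpow_tripleExponent hw', mul_comm]
  have hws : w - s ≠ 0 := by linarith [le_abs_self s]
  have hwq : w ^ a - q ≠ 0 := by linarith [le_abs_self q, abs_nonneg u]
  have hwqu : w ^ a - q - u ≠ 0 := by linarith [le_abs_self q, le_abs_self u]
  have hvalue : (w ^ a - q) / ((w - s) * (w ^ a - q - u))
      = w⁻¹ * ((1 - s * w⁻¹)⁻¹ * (1 - u * w⁻¹ ^ a / (1 - q * w⁻¹ ^ a))⁻¹) := by
    rw [hv, show 1 - q * (w ^ a)⁻¹ = (w ^ a - q) / w ^ a by field_simp,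
      show 1 - u * (w ^ a)⁻¹ / ((w ^ a - q) / w ^ a) = (w ^ a - q - u) / (w ^ a - q) by
        field_simp]
    field_simp
  rw [hterm, hvalue]
  exact (hasSum_tripleTerm hs' hqu').mul_left w⁻¹

lemma MeasureTheory.ae_summable_norm_of_summable_integral_norm {α E ι : Type*}
    [MeasurableSpace α] {μ : Measure α} [NormedAddCommGroup E] [Countable ι]
    {F : ι → α → E}
    (hF_int : ∀ i, Integrable (F i) μ) (hF_sum : Summable fun i => ∫ a, ‖F i a‖ ∂μ) :
    ∀ᵐ a ∂μ, Summable fun i => ‖F i a‖ := by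
  refine summable_norm_of_tsum_eLpNorm_ne_top le_rfl (fun i => (hF_int i).1) ?_
  simp_rw [eLpNorm_one_eq_lintegral_enorm, ← ofReal_integral_norm_eq_lintegral_enorm (hF_int _),
    ← ENNReal.ofReal_tsum_of_nonneg (fun i => integral_nonneg fun a => norm_nonneg _) hF_sum]
  exact ENNReal.ofReal_ne_top

section Laplace

variable {w e : ℝ}

lemma integrableOn_exp_neg_mul_mul_rpow_div_Gamma (hw : 0 < w) (he : -1 < e) (c : ℝ) :
    IntegrableOn (fun t => exp (-(w * t)) * (c * t ^ e / Gamma (e + 1))) (Ioi 0) := by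
  have hgamma := integrableOn_rpow_mul_exp_neg_mul_rpow he zero_lt_one hw
  refine IntegrableOn.congr_fun (hgamma.const_mul (c / Gamma (e + 1))) (fun t _ => ?_)
    measurableSet_Ioi
  rw [rpow_one, neg_mul]
  ring

lemma integral_exp_neg_mul_mul_rpow_div_Gamma (hw : 0 < w) (he : -1 < e) (c : ℝ) :
    ∫ t in Ioi 0, exp (-(w * t)) * (c * t ^ e / Gamma (e + 1)) = c * w⁻¹ ^ (e + 1) := by
  have hΓ : Gamma (e + 1) ≠ 0 := (Gamma_pos_of_pos (by linarith)).ne'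
  have hgamma := integral_rpow_mul_exp_neg_mul_Ioi (a := e + 1) (by linarith) hw
  rw [add_sub_cancel_right, one_div] at hgamma
  calc ∫ t in Ioi 0, exp (-(w * t)) * (c * t ^ e / Gamma (e + 1))
      = c / Gamma (e + 1) * ∫ t in Ioi 0, t ^ e * exp (-(w * t)) := by
        rw [← integral_const_mul]
        congr 1 with t
        ring
    _ = c * w⁻¹ ^ (e + 1) := by
        rw [hgamma]
        field_simp

lemma integral_norm_exp_neg_mul_mul_rpow_div_Gamma (hw : 0 < w) (he : -1 < e) (c : ℝ) :
    ∫ t in Ioi 0, ‖exp (-(w * t)) * (c * t ^ e / Gamma (e + 1))‖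
      = |c| * w⁻¹ ^ (e + 1) := by
  rw [← integral_exp_neg_mul_mul_rpow_div_Gamma hw he |c|]
  refine setIntegral_congr_fun measurableSet_Ioi fun t (ht : 0 < t) => ?_
  have hΓ : 0 < Gamma (e + 1) := Gamma_pos_of_pos (by linarith)
  rw [Real.norm_eq_abs, abs_mul, abs_of_pos (exp_pos _), abs_div, abs_mul,
    abs_of_pos (rpow_pos_of_pos ht e), abs_of_pos hΓ]

end Laplace

section LaplaceSeries

variable {ι : Type*} {c e : ι → ℝ} {w : ℝ}

lemma summable_integral_norm_exp_neg_mul_mul_rpow_div_Gamma (hw : 0 < w) (he : ∀ i, -1 < e i)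
    (hc : Summable fun i => c i * w⁻¹ ^ (e i + 1)) :
    Summable fun i => ∫ t in Ioi 0, ‖exp (-(w * t)) * (c i * t ^ e i / Gamma (e i + 1))‖ := by
  simp_rw [integral_norm_exp_neg_mul_mul_rpow_div_Gamma hw (he _)]
  refine hc.abs.congr fun i => ?_
  rw [abs_mul, abs_of_pos (rpow_pos_of_pos (inv_pos.2 hw) _)]

lemma ae_summable_rpow_div_Gamma [Countable ι] (hw : 0 < w) (he : ∀ i, -1 < e i)
    (hc : Summable fun i => c i * w⁻¹ ^ (e i + 1)) :
    ∀ᵐ t ∂volume.restrict (Ioi 0), Summable fun i => c i * t ^ e i / Gamma (e i + 1) := by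
  filter_upwards [ae_summable_norm_of_summable_integral_norm
    (fun i => integrableOn_exp_neg_mul_mul_rpow_div_Gamma hw (he i) (c i))
    (summable_integral_norm_exp_neg_mul_mul_rpow_div_Gamma hw he hc)] with t ht
  refine ((Summable.of_norm ht).mul_left (exp (w * t))).congr fun i => ?_
  rw [← mul_assoc, ← exp_add, add_neg_cancel, exp_zero, one_mul]

lemma integral_exp_neg_mul_tsum_rpow_div_Gamma [Countable ι] (hw : 0 < w) (he : ∀ i, -1 < e i)
    (hc : Summable fun i => c i * w⁻¹ ^ (e i + 1)) :
    ∫ t in Ioi 0, exp (-(w * t)) * ∑' i, c i * t ^ e i / Gamma (e i + 1)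
      = ∑' i, c i * w⁻¹ ^ (e i + 1) := by
  simp_rw [← tsum_mul_left, ← integral_exp_neg_mul_mul_rpow_div_Gamma hw (he _)]
  exact (hasSum_integral_of_summable_integral_norm
    (fun i => integrableOn_exp_neg_mul_mul_rpow_div_Gamma hw (he i) (c i))
    (summable_integral_norm_exp_neg_mul_mul_rpow_div_Gamma hw he hc)).tsum_eq.symm

end LaplaceSeries

lemma tsum_tsum_mul_ML3nat_eq_tsum {u s q a t : ℝ} (ht : 0 < t)
    (hsum : Summable fun p => tripleTerm u s q p * t ^ tripleExponent a p /
      Gamma (tripleExponent a p + 1)) :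
    ∑' n : ℕ, ∑' r : ℕ,
        (u * t ^ a) ^ n * (s * t) ^ r * ML3nat a (n * a + r + 1) n (q * t ^ a)
      = ∑' p, tripleTerm u s q p * t ^ tripleExponent a p / Gamma (tripleExponent a p + 1) := by
  rw [hsum.tsum_prod]
  refine tsum_congr fun n => ?_
  rw [(hsum.prod_factor n).tsum_prod]
  refine tsum_congr fun r => ?_
  rw [ML3nat, ← tsum_mul_left]
  refine tsum_congr fun k => ?_
  have hΓ : tripleExponent a (n, r, k) + 1 = a * k + (n * a + r + 1) := by
    simp only [tripleExponent]
    ring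
  rw [tripleTerm_mul_rpow_tripleExponent ht, hΓ]
  simp only [tripleTerm]
  field_simp

theorem laplace_transform_tempered_mittagLeffler_survival_general
    (θ a ν : ℝ) (hθ : 0 < θ) (ha : 0 < a) (hν : 0 < ν) :
    ∃ Z : ℝ, ∀ z > Z, 0 < z ∧
      ∫ t in Set.Ioi (0 : ℝ),
          Real.exp (-z * t) * (Real.exp (-θ * t) *
            ∑' n : ℕ, ∑' r : ℕ,
              (-ν * t ^ a) ^ n * (θ * t) ^ r * ML3nat a (n * a + r + 1) n (θ ^ a * t ^ a))
        = ((z + θ) ^ a - θ ^ a) / (z * (((z + θ) ^ a - θ ^ a) + ν)) := by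
  refine ⟨(θ ^ a + ν) ^ a⁻¹, fun z hz => ?_⟩
  have hθa : 0 < θ ^ a := rpow_pos_of_pos hθ a
  have hz0 : 0 < z := (rpow_pos_of_pos (by positivity) _).trans hz
  refine ⟨hz0, ?_⟩
  have hw : 0 < z + θ := by positivity
  have hza : θ ^ a + ν < (z + θ) ^ a :=
    ((rpow_inv_lt_iff_of_pos (by positivity) hz0.le ha).1 hz).trans
      (rpow_lt_rpow hz0.le (by linarith) ha)
  have hseries := hasSum_tripleTerm_mul_inv_rpow (u := -ν) (s := θ) (q := θ ^ a) hw
    (by rw [abs_of_pos hθ]; linarith) (by rwa [abs_of_pos hθa, abs_neg, abs_of_pos hν])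
  have he (p : ℕ × ℕ × ℕ) : -1 < tripleExponent a p := by
    linarith [tripleExponent_nonneg ha.le p]
  have hintegrand : ∀ᵐ t ∂volume.restrict (Ioi 0),
      exp (-z * t) * (exp (-θ * t) * ∑' n : ℕ, ∑' r : ℕ,
        (-ν * t ^ a) ^ n * (θ * t) ^ r * ML3nat a (n * a + r + 1) n (θ ^ a * t ^ a))
      = exp (-((z + θ) * t)) * ∑' p, tripleTerm (-ν) θ (θ ^ a) p * t ^ tripleExponent a p /
          Gamma (tripleExponent a p + 1) := by
    filter_upwards [ae_summable_rpow_div_Gamma hw he hseries.summable,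
      ae_restrict_mem measurableSet_Ioi] with t hsum ht
    rw [tsum_tsum_mul_ML3nat_eq_tsum ht hsum, ← mul_assoc, ← exp_add]
    ring_nf
  rw [integral_congr_ae hintegrand, integral_exp_neg_mul_tsum_rpow_div_Gamma hw he
    hseries.summable, hseries.tsum_eq, add_sub_cancel_right, sub_neg_eq_add]

theorem laplace_transform_tempered_mittagLeffler_survival
    (θ a ν : ℝ) (hθ : 0 < θ) (ha : 0 < a) (ha1 : a < 1) (hν : 0 < ν) :
    ∃ Z : ℝ, ∀ z > Z, 0 < z ∧
      ∫ t in Set.Ioi (0 : ℝ),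
          Real.exp (-z * t) * (Real.exp (-θ * t) *
            ∑' n : ℕ, ∑' r : ℕ,
              (-ν * t ^ a) ^ n * (θ * t) ^ r * ML3nat a (n * a + r + 1) n (θ ^ a * t ^ a))
        = ((z + θ) ^ a - θ ^ a) / (z * (((z + θ) ^ a - θ ^ a) + ν)) :=
  laplace_transform_tempered_mittagLeffler_survival_general θ a ν hθ ha hν
end
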